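/- arXiv:1409.7500 — 4 statements merged into one kernel-verified Lean document; each statement's English description precedes it below -/
import Mathlib

section
/- If the X-ray transform is injective on compactly supported continuous functions on ℝ², then the broken ray transform on the closed upper half plane with reflecting set R = ℝ × {0} is injective: any compactly supported continuous function f on ℝ × [0,∞) whose integral over every broken ray (straight lines and lines reflecting once off the x-axis) vanishes must be identically zero. -/
/-!
Extend `f` evenly across the x-axis. Folding the plane back onto the half plane maps each
non-horizontal line onto the broken ray reflecting where the line crosses the axis, and each
horizontal line onto a horizontal line in the half plane, so the extension has vanishing X-ray
transform and is therefore zero.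
-/

open MeasureTheory Set

section Lines

variable {E F : Type*} [AddCommGroup E] [Module ℝ E] [NormedAddCommGroup F]

theorem Continuous.integrable_comp_line [TopologicalSpace E] [IsTopologicalAddGroup E]
    [ContinuousSMul ℝ E] [T2Space E] {g : E → F} (hg : Continuous g) (hgs : HasCompactSupport g)
    (p : E) {v : E} (hv : v ≠ 0) : Integrable fun t : ℝ => g (p + t • v) := by
  have hline : Topology.IsClosedEmbedding fun t : ℝ => p + t • v :=
    (Homeomorph.addLeft p).isClosedEmbedding.comp (isClosedEmbedding_smul_left hv)
  exact (hg.comp hline.continuous).integrable_of_hasCompactSupport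
    (hgs.comp_isClosedEmbedding hline)

variable [NormedSpace ℝ F]

theorem integral_line_neg_dir (g : E → F) (p v : E) :
    ∫ t : ℝ, g (p + t • -v) = ∫ t : ℝ, g (p + t • v) := by
  simp_rw [smul_neg, ← neg_smul]
  exact integral_neg_eq_self (fun t : ℝ => g (p + t • v)) volume

theorem integral_line_shift (g : E → F) (p v : E) (s : ℝ) :
    ∫ t : ℝ, g (p + s • v + t • v) = ∫ t : ℝ, g (p + t • v) := by
  simp_rw [add_assoc, ← add_smul, add_comm s]
  exact integral_add_right_eq_self (fun t : ℝ => g (p + t • v)) s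

end Lines

section EvenExtension

def evenExt (f : ℝ × ℝ → ℝ) (x : ℝ × ℝ) : ℝ := f (x.1, |x.2|)

variable {f : ℝ × ℝ → ℝ}

theorem evenExt_of_nonneg {x : ℝ × ℝ} (hx : 0 ≤ x.2) : evenExt f x = f x := by
  simp [evenExt, abs_of_nonneg hx]

theorem Continuous.evenExt (hf : Continuous f) : Continuous (evenExt f) :=
  hf.comp (continuous_fst.prodMk continuous_snd.abs)

theorem HasCompactSupport.evenExt (hf : HasCompactSupport f) : HasCompactSupport (evenExt f) := by
  let σ : ℝ × ℝ → ℝ × ℝ := fun x => (x.1, -x.2)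
  refine .intro (hf.isCompact.union (hf.isCompact.image (by fun_prop : Continuous σ)))
    fun x hx => by_contra fun hfx => hx ?_
  have hmem : (x.1, |x.2|) ∈ tsupport f := subset_tsupport f hfx
  rcases le_or_gt 0 x.2 with hx2 | hx2
  · left; simpa [abs_of_nonneg hx2] using hmem
  · right; exact ⟨_, hmem, by simp [σ, abs_of_neg hx2]⟩

theorem integral_evenExt_horizontal (p v : ℝ × ℝ) (hv : v.2 = 0) :
    ∫ t : ℝ, evenExt f (p + t • v) = ∫ t : ℝ, f (p.1 + t * v.1, |p.2| + t * v.2) := by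
  simp [evenExt, hv]

/-- The line crosses the axis at `(p.1 - p.2 / v.2 * v.1, 0)`, where the broken ray reflects. -/
theorem integral_evenExt_line_of_pos (hf : Continuous f) (hsupp : HasCompactSupport f)
    (p : ℝ × ℝ) {v : ℝ × ℝ} (hv : 0 < v.2) :
    ∫ t : ℝ, evenExt f (p + t • v) =
      (∫ t in Iic (0 : ℝ), f (p.1 - p.2 / v.2 * v.1 + t * v.1, -(t * v.2))) +
        ∫ t in Ici (0 : ℝ), f (p.1 - p.2 / v.2 * v.1 + t * v.1, t * v.2) := by
  set q : ℝ × ℝ := p + (-(p.2 / v.2)) • v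
  have hq : q = (p.1 - p.2 / v.2 * v.1, 0) := by
    ext <;> simp [q] <;> field_simp <;> ring
  have hint := hf.evenExt.integrable_comp_line hsupp.evenExt q (v := v) (by
    rintro rfl; exact hv.ne' rfl)
  rw [← integral_line_shift _ p v (-(p.2 / v.2)),
    ← intervalIntegral.integral_Iic_add_Ioi hint.integrableOn hint.integrableOn,
    ← integral_Ici_eq_integral_Ioi, hq]
  congr 1
  · refine setIntegral_congr_fun measurableSet_Iic fun t ht => ?_
    simp [evenExt, abs_of_nonpos (mul_nonpos_of_nonpos_of_nonneg ht hv.le)]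
  · refine setIntegral_congr_fun measurableSet_Ici fun t ht => ?_
    simp [evenExt, abs_of_nonneg (mul_nonneg ht hv.le)]

end EvenExtension

/-- if the X-ray transform on ℝ² is injective on compactly supported
continuous functions, then the broken ray transform on the closed upper half plane
with reflecting set `ℝ × {0}` is injective: a compactly supported continuous function
on the half plane integrating to zero over all broken rays (horizontal lines contained
in the half plane and rays reflecting once off the x-axis) vanishes. -/
theorem stmt1
    (hxray : ∀ g : ℝ × ℝ → ℝ, Continuous g → HasCompactSupport g →
      (∀ p v : ℝ × ℝ, v.1 ^ 2 + v.2 ^ 2 = 1 →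
        (∫ t : ℝ, g (p.1 + t * v.1, p.2 + t * v.2)) = 0) → ∀ x, g x = 0)
    (f : ℝ × ℝ → ℝ) (hf : Continuous f) (hsupp : HasCompactSupport f)
    (hlines : ∀ p v : ℝ × ℝ, 0 ≤ p.2 → v.1 ^ 2 + v.2 ^ 2 = 1 → v.2 = 0 →
      (∫ t : ℝ, f (p.1 + t * v.1, p.2 + t * v.2)) = 0)
    (hbroken : ∀ (a : ℝ) (v : ℝ × ℝ), v.1 ^ 2 + v.2 ^ 2 = 1 → 0 < v.2 →
      (∫ t in Set.Iic (0 : ℝ), f (a + t * v.1, -(t * v.2))) +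
        (∫ t in Set.Ici (0 : ℝ), f (a + t * v.1, t * v.2)) = 0) :
    ∀ x : ℝ × ℝ, 0 ≤ x.2 → f x = 0 := by
  have upward : ∀ p v : ℝ × ℝ, v.1 ^ 2 + v.2 ^ 2 = 1 → 0 < v.2 →
      ∫ t : ℝ, evenExt f (p + t • v) = 0 := fun p v hv hv2 => by
    rw [integral_evenExt_line_of_pos hf hsupp p hv2]
    exact hbroken _ v hv hv2
  intro x hx
  rw [← evenExt_of_nonneg (f := f) hx]
  refine hxray _ hf.evenExt hsupp.evenExt (fun p v hv => ?_) x
  change ∫ t : ℝ, evenExt f (p + t • v) = 0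
  rcases lt_trichotomy v.2 0 with hdown | hhor | hup
  · rw [← integral_line_neg_dir]
    exact upward p (-v) (by simpa using hv) (by simpa using hdown)
  · rw [integral_evenExt_horizontal p v hhor]
    exact hlines (p.1, |p.2|) v (abs_nonneg p.2) hv hhor
  · exact upward p v hv hup
end

section
/- The Abel transform is injective on continuous functions: if a : [0,1] → ℝ is continuous and ∫_z^1 a(r) · r / √(r² − z²) dr = 0 for all z ∈ (0,1), then a ≡ 0. -/
/-!
Multiplying `(𝒜a)(z)` by `z / √(z² - y²)` and integrating over `z ∈ (y, 1)`, Fubini turns the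
result into `∫_y^1 a(r) r K(y, r) dr`, where `K(y, r) = ∫_y^r z dz / (√(z² - y²) √(r² - z²)) = π/2`
(a primitive is `½ arcsin ((2z² - y² - r²) / (r² - y²))`). So if `𝒜a` vanishes, every tail moment
`∫_y^1 a(r) r dr` vanishes; differentiating in `y` gives `a(y) y = 0`, and continuity gives
`a = 0` on `[0, 1]`.
-/

open MeasureTheory Set Real Topology

/-- For `0 ≤ y` and `0 ≤ r`, the junk values `√x = 0` for `x ≤ 0` and `x / 0 = 0` make this vanish
for `z ≥ 0` outside `(y, r)`. -/
noncomputable def abelKernel (y r z : ℝ) : ℝ :=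
  z / (√(z ^ 2 - y ^ 2) * √(r ^ 2 - z ^ 2))

noncomputable def abelTransform (a : ℝ → ℝ) (b z : ℝ) : ℝ :=
  ∫ r in z..b, a r * r / √(r ^ 2 - z ^ 2)

variable {y r z b : ℝ}

lemma abelKernel_nonneg (hz : 0 ≤ z) : 0 ≤ abelKernel y r z := by
  unfold abelKernel; positivity

lemma abelKernel_eq_zero_of_le (hr : 0 ≤ r) (hrz : r ≤ z) : abelKernel y r z = 0 := by
  rw [abelKernel, sqrt_eq_zero'.mpr (show r ^ 2 - z ^ 2 ≤ 0 by nlinarith), mul_zero, div_zero]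

lemma hasDerivAt_abelKernel_primitive (hy : 0 ≤ y) (hz : z ∈ Ioo y r) :
    HasDerivAt (fun t => arcsin ((2 * t ^ 2 - y ^ 2 - r ^ 2) / (r ^ 2 - y ^ 2)) / 2)
      (abelKernel y r z) z := by
  obtain ⟨hyz, hzr⟩ := hz
  have hd : 0 < r ^ 2 - y ^ 2 := by nlinarith
  have hA : 0 < z ^ 2 - y ^ 2 := by nlinarith
  have hB : 0 < r ^ 2 - z ^ 2 := by nlinarith
  have hu : HasDerivAt (fun t => (2 * t ^ 2 - y ^ 2 - r ^ 2) / (r ^ 2 - y ^ 2))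
      (4 * z / (r ^ 2 - y ^ 2)) z := by
    refine (((((hasDerivAt_pow 2 z).const_mul 2).sub_const (y ^ 2)).sub_const (r ^ 2)).div_const
      (r ^ 2 - y ^ 2)).congr_deriv ?_
    norm_num
    ring
  have hlo : (2 * z ^ 2 - y ^ 2 - r ^ 2) / (r ^ 2 - y ^ 2) ≠ -1 := by
    rw [Ne, div_eq_iff hd.ne']; nlinarith
  have hhi : (2 * z ^ 2 - y ^ 2 - r ^ 2) / (r ^ 2 - y ^ 2) ≠ 1 := by
    rw [Ne, div_eq_iff hd.ne']; nlinarith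
  have hsq : 1 - ((2 * z ^ 2 - y ^ 2 - r ^ 2) / (r ^ 2 - y ^ 2)) ^ 2
      = (2 * √(z ^ 2 - y ^ 2) * √(r ^ 2 - z ^ 2) / (r ^ 2 - y ^ 2)) ^ 2 := by
    rw [div_pow, div_pow, mul_pow, mul_pow, sq_sqrt hA.le, sq_sqrt hB.le]
    field_simp
    ring
  refine (((hasDerivAt_arcsin hlo hhi).comp z hu).div_const 2).congr_deriv ?_
  rw [hsq, sqrt_sq (by positivity), abelKernel]
  field_simp
  ring

lemma integrableOn_abelKernel (hy : 0 ≤ y) (hyr : y < r) :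
    IntegrableOn (abelKernel y r) (Ioc y b) :=
  (intervalIntegral.integrableOn_deriv_of_nonneg (by fun_prop)
      (fun _ hz => hasDerivAt_abelKernel_primitive hy hz)
      fun _ hz => abelKernel_nonneg (hy.trans hz.1.le)).of_forall_sdiff_eq_zero
    measurableSet_Ioc fun _ hz =>
      abelKernel_eq_zero_of_le (hy.trans hyr.le) (le_of_not_ge fun h => hz.2 ⟨hz.1.1, h⟩)

lemma integral_abelKernel (hy : 0 ≤ y) (hyr : y < r) :
    ∫ z in y..r, abelKernel y r z = π / 2 := by
  have hd : r ^ 2 - y ^ 2 ≠ 0 := by nlinarith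
  rw [intervalIntegral.integral_eq_sub_of_hasDerivAt_of_le hyr.le (by fun_prop)
    (fun _ hz => hasDerivAt_abelKernel_primitive hy hz)
    ((intervalIntegrable_iff_integrableOn_Ioc_of_le hyr.le).mpr (integrableOn_abelKernel hy hyr))]
  have hr : (2 * r ^ 2 - y ^ 2 - r ^ 2) / (r ^ 2 - y ^ 2) = 1 := by field_simp; ring
  have hy' : (2 * y ^ 2 - y ^ 2 - r ^ 2) / (r ^ 2 - y ^ 2) = -1 := by field_simp; ring
  rw [hr, hy', arcsin_one, arcsin_neg_one]
  ring

lemma setIntegral_Ioc_abelKernel (hy : 0 ≤ y) (hyr : y < r) (hrb : r ≤ b) :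
    ∫ z in Ioc y b, abelKernel y r z = π / 2 := by
  rw [setIntegral_eq_of_subset_of_forall_sdiff_eq_zero measurableSet_Ioc
    (Ioc_subset_Ioc_right hrb) fun _ hz =>
      abelKernel_eq_zero_of_le (hy.trans hyr.le) (le_of_not_ge fun h => hz.2 ⟨hz.1.1, h⟩),
    ← intervalIntegral.integral_of_le hyr.le, integral_abelKernel hy hyr]

lemma integrable_abelKernel_prod {a : ℝ → ℝ} (hy : 0 ≤ y) (ha : ContinuousOn a (Icc y b)) :
    Integrable (Function.uncurry fun z r => a r * r * abelKernel y r z)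
      ((volume.restrict (Ioc y b)).prod (volume.restrict (Ioc y b))) := by
  have hmoment : IntegrableOn (fun r => a r * r) (Ioc y b) :=
    ((ha.mul continuousOn_id).integrableOn_Icc).mono_set Ioc_subset_Icc_self
  have hkernel : Measurable fun p : ℝ × ℝ => abelKernel y p.2 p.1 := by
    unfold abelKernel; fun_prop
  have hmeas : AEStronglyMeasurable (Function.uncurry fun z r => a r * r * abelKernel y r z)
      ((volume.restrict (Ioc y b)).prod (volume.restrict (Ioc y b))) :=
    hmoment.1.comp_snd.mul hkernel.aestronglyMeasurable
  refine (integrable_prod_iff' hmeas).mpr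
    ⟨ae_restrict_of_forall_mem measurableSet_Ioc fun r hr =>
      (integrableOn_abelKernel (b := b) hy hr.1).const_mul (a r * r), ?_⟩
  refine (hmoment.norm.mul_const (π / 2)).congr <|
    ae_restrict_of_forall_mem measurableSet_Ioc fun r hr => ?_
  have hnorm : ∀ z ∈ Ioc y b, ‖a r * r * abelKernel y r z‖ = ‖a r * r‖ * abelKernel y r z :=
    fun z hz => by rw [norm_mul, Real.norm_of_nonneg (abelKernel_nonneg (hy.trans hz.1.le))]
  simp only [Function.uncurry_apply_pair]
  rw [setIntegral_congr_fun measurableSet_Ioc hnorm, integral_const_mul,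
    setIntegral_Ioc_abelKernel hy hr.1 hr.2]

theorem integral_mul_abelTransform {a : ℝ → ℝ} (hy : 0 ≤ y) (hyb : y ≤ b)
    (ha : ContinuousOn a (Icc y b)) :
    ∫ z in y..b, z / √(z ^ 2 - y ^ 2) * abelTransform a b z = π / 2 * ∫ r in y..b, a r * r := by
  have hinner : ∀ z ∈ Ioc y b, z / √(z ^ 2 - y ^ 2) * abelTransform a b z =
      ∫ r in Ioc y b, a r * r * abelKernel y r z := by
    intro z hz
    have hsplit : ∀ r, a r * r * abelKernel y r z =
        z / √(z ^ 2 - y ^ 2) * (a r * r / √(r ^ 2 - z ^ 2)) :=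
      fun r => by rw [abelKernel]; ring
    simp only [hsplit]
    rw [integral_const_mul, abelTransform, intervalIntegral.integral_of_le hz.2,
      setIntegral_eq_of_subset_of_forall_sdiff_eq_zero measurableSet_Ioc
        (Ioc_subset_Ioc_left hz.1.le)]
    intro r hr
    have hrz : r ≤ z := le_of_not_gt fun h => hr.2 ⟨h, hr.1.2⟩
    rw [sqrt_eq_zero'.mpr (by nlinarith [hr.1.1]), div_zero]
  calc ∫ z in y..b, z / √(z ^ 2 - y ^ 2) * abelTransform a b z
      = ∫ z in Ioc y b, ∫ r in Ioc y b, a r * r * abelKernel y r z := by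
        rw [intervalIntegral.integral_of_le hyb]
        exact setIntegral_congr_fun measurableSet_Ioc hinner
    _ = ∫ r in Ioc y b, ∫ z in Ioc y b, a r * r * abelKernel y r z :=
        integral_integral_swap (integrable_abelKernel_prod hy ha)
    _ = ∫ r in Ioc y b, π / 2 * (a r * r) := by
        refine setIntegral_congr_fun measurableSet_Ioc fun r hr => ?_
        rw [integral_const_mul, setIntegral_Ioc_abelKernel hy hr.1 hr.2, mul_comm]
    _ = π / 2 * ∫ r in y..b, a r * r := by
        rw [intervalIntegral.integral_of_le hyb, integral_const_mul]

lemma eqOn_zero_of_forall_integral_eq_zero {g : ℝ → ℝ} {c d : ℝ} (hg : ContinuousOn g (Icc c d))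
    (h : ∀ y ∈ Ioo c d, ∫ x in y..d, g x = 0) : EqOn g 0 (Ioo c d) := by
  intro x hx
  have hderiv := intervalIntegral.integral_hasDerivAt_left
    ((hg.mono (Icc_subset_Icc_left hx.1.le)).intervalIntegrable_of_Icc hx.2.le)
    ((hg.mono Ioo_subset_Icc_self).stronglyMeasurableAtFilter isOpen_Ioo x hx)
    (hg.continuousAt (Icc_mem_nhds hx.1 hx.2))
  have hlocal : (fun u => ∫ t in u..d, g t) =ᶠ[𝓝 x] fun _ => 0 :=
    Filter.eventually_of_mem (isOpen_Ioo.mem_nhds hx) h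
  simpa using hderiv.deriv.symm.trans (hlocal.deriv_eq.trans (deriv_const x 0))

/-- the Abel transform is injective on continuous functions: if
`a : [0,1] → ℝ` is continuous and `∫_z^1 a(r)·r/√(r²−z²) dr = 0` for all
`z ∈ (0,1)`, then `a ≡ 0` on `[0,1]`. -/
theorem stmt4 (a : ℝ → ℝ) (ha : ContinuousOn a (Set.Icc 0 1))
    (h : ∀ z ∈ Set.Ioo (0 : ℝ) 1,
      (∫ r in z..1, a r * r / Real.sqrt (r ^ 2 - z ^ 2)) = 0) :
    ∀ r ∈ Set.Icc (0 : ℝ) 1, a r = 0 := by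
  have hmoment : ∀ y ∈ Ioo (0 : ℝ) 1, ∫ r in y..1, a r * r = 0 := by
    intro y hy
    have hzero : ∫ z in y..1, z / √(z ^ 2 - y ^ 2) * abelTransform a 1 z = 0 := by
      refine (intervalIntegral.integral_congr (g := fun _ => 0) fun z hz => ?_).trans
        intervalIntegral.integral_zero
      rw [uIcc_of_le hy.2.le] at hz
      rcases hz.2.lt_or_eq with hz1 | rfl
      · simp only [abelTransform, h z ⟨hy.1.trans_le hz.1, hz1⟩, mul_zero]
      · simp only [abelTransform, intervalIntegral.integral_same, mul_zero]
    have hidentity := integral_mul_abelTransform hy.1.le hy.2.le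
      (ha.mono (Icc_subset_Icc_left hy.1.le))
    rw [hzero] at hidentity
    exact (mul_eq_zero.mp hidentity.symm).resolve_left (by positivity)
  have hmul : EqOn (fun r => a r * r) 0 (Ioo 0 1) :=
    eqOn_zero_of_forall_integral_eq_zero (ha.mul continuousOn_id) hmoment
  have hIoo : EqOn a 0 (Ioo 0 1) := fun r hr => (mul_eq_zero.mp (hmul hr)).resolve_right hr.1.ne'
  exact fun r hr => hIoo.of_subset_closure ha continuousOn_const Ioo_subset_Icc_self
    (closure_Ioo zero_ne_one).symm.subset hr
end

section
/- If a continuous function f on the closed unit disc has vanishing broken ray transform with set of tomography an open arc E ⊂ S¹, and if f is differentiable in the angular variable with ∂_θ f continuous, then ∂_θ f also has vanishing broken ray transform with respect to a slightly smaller open arc E' ⋐ E. -/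
/-!
Rotations are linear isometries, so they map broken rays to broken rays, and rotating a broken
ray with endpoints in `E'` by a small angle `β` keeps its endpoints in `E`. Hence
`β ↦ brtSum f n (rot β ∘ x)` vanishes near `0`. Differentiating under the integral sign, with `g`
bounded on a rotation-invariant ball containing the ray, its derivative at `0` is `brtSum g n x`,
which therefore vanishes.
-/

open MeasureTheory
open scoped RealInnerProductSpace

noncomputable def pt2 (a b : ℝ) : EuclideanSpace ℝ (Fin 2) :=
  (WithLp.equiv 2 (Fin 2 → ℝ)).symm ![a, b]

/-- Rotation of the plane by angle `β` about the origin. -/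
noncomputable def rot (β : ℝ) (x : EuclideanSpace ℝ (Fin 2)) : EuclideanSpace ℝ (Fin 2) :=
  pt2 (Real.cos β * (WithLp.equiv 2 (Fin 2 → ℝ)) x 0 - Real.sin β * (WithLp.equiv 2 (Fin 2 → ℝ)) x 1)
      (Real.sin β * (WithLp.equiv 2 (Fin 2 → ℝ)) x 0 + Real.cos β * (WithLp.equiv 2 (Fin 2 → ℝ)) x 1)

/-- The open arc of the unit circle consisting of the points of angle `θ ∈ (a,b)`. -/
def arc (a b : ℝ) : Set (EuclideanSpace ℝ (Fin 2)) :=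
  {p | ∃ θ : ℝ, a < θ ∧ θ < b ∧ p = pt2 (Real.cos θ) (Real.sin θ)}

/-- A broken ray in the closed unit disc, encoded by its successive vertices on the
unit circle, with the reflection law at interior vertices. -/
def IsBrokenRayDisc (n : ℕ) (x : ℕ → EuclideanSpace ℝ (Fin 2)) : Prop :=
  1 ≤ n ∧ (∀ i ≤ n, ‖x i‖ = 1) ∧ (∀ i < n, x i ≠ x (i + 1)) ∧
  ∀ i, i + 2 ≤ n →
    ‖x (i + 2) - x (i + 1)‖⁻¹ • (x (i + 2) - x (i + 1)) =
      ‖x (i + 1) - x i‖⁻¹ • (x (i + 1) - x i) -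
        (2 * ⟪‖x (i + 1) - x i‖⁻¹ • (x (i + 1) - x i), x (i + 1)⟫) • x (i + 1)

/-- The integral of `f` over a broken ray with respect to arc length. -/
noncomputable def brtSum (f : EuclideanSpace ℝ (Fin 2) → ℝ) (n : ℕ)
    (x : ℕ → EuclideanSpace ℝ (Fin 2)) : ℝ :=
  ∑ i ∈ Finset.range n,
    ‖x (i + 1) - x i‖ * ∫ t in (0 : ℝ)..1, f (x i + t • (x (i + 1) - x i))

open Filter Topology

local notation "E²" => EuclideanSpace ℝ (Fin 2)

lemma ext_fin_two {u v : E²} (h0 : u 0 = v 0) (h1 : u 1 = v 1) : u = v :=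
  PiLp.ext (Fin.forall_fin_two.2 ⟨h0, h1⟩)

lemma pt2_apply_zero (s t : ℝ) : pt2 s t 0 = s := rfl

lemma pt2_apply_one (s t : ℝ) : pt2 s t 1 = t := rfl

lemma rot_apply_zero (β : ℝ) (x : E²) : rot β x 0 = Real.cos β * x 0 - Real.sin β * x 1 := rfl

lemma rot_apply_one (β : ℝ) (x : E²) : rot β x 1 = Real.sin β * x 0 + Real.cos β * x 1 := rfl

noncomputable def rotLI (β : ℝ) : E² →ₗᵢ[ℝ] E² where
  toFun := rot β
  map_add' u v := by
    apply ext_fin_two <;> simp only [rot_apply_zero, rot_apply_one, PiLp.add_apply] <;> ring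
  map_smul' t u := by
    apply ext_fin_two <;>
      simp only [rot_apply_zero, rot_apply_one, PiLp.smul_apply, smul_eq_mul, RingHom.id_apply] <;>
      ring
  norm_map' u := by
    change ‖rot β u‖ = ‖u‖
    simp only [EuclideanSpace.norm_eq, Fin.sum_univ_two, Real.norm_eq_abs, sq_abs,
      rot_apply_zero, rot_apply_one]
    congr 1
    linear_combination (u 0 ^ 2 + u 1 ^ 2) * Real.sin_sq_add_cos_sq β

@[simp]
lemma rotLI_apply (β : ℝ) (x : E²) : rotLI β x = rot β x := rfl

lemma rot_zero (x : E²) : rot 0 x = x := by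
  apply ext_fin_two <;> simp [rot_apply_zero, rot_apply_one]

lemma rot_rot (β γ : ℝ) (x : E²) : rot β (rot γ x) = rot (β + γ) x := by
  apply ext_fin_two <;>
    simp only [rot_apply_zero, rot_apply_one, Real.cos_add, Real.sin_add] <;> ring

lemma rot_cos_sin (β θ : ℝ) :
    rot β (pt2 (Real.cos θ) (Real.sin θ)) = pt2 (Real.cos (θ + β)) (Real.sin (θ + β)) := by
  apply ext_fin_two <;>
    simp only [rot_apply_zero, rot_apply_one, pt2_apply_zero, pt2_apply_one, Real.cos_add,
      Real.sin_add] <;> ring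

lemma rot_mem_arc {a b : ℝ} {p : E²} (hp : p ∈ arc a b) (β : ℝ) :
    rot β p ∈ arc (a + β) (b + β) := by
  obtain ⟨θ, haθ, hθb, rfl⟩ := hp
  exact ⟨θ + β, by linarith, by linarith, rot_cos_sin β θ⟩

lemma arc_mono {a b c d : ℝ} (hac : a ≤ c) (hdb : d ≤ b) : arc c d ⊆ arc a b :=
  fun _ ⟨θ, hcθ, hθd, hp⟩ => ⟨θ, by linarith, by linarith, hp⟩

lemma IsBrokenRayDisc.map {n : ℕ} {x : ℕ → E²} (hx : IsBrokenRayDisc n x) (L : E² →ₗᵢ[ℝ] E²) :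
    IsBrokenRayDisc n (fun i => L (x i)) := by
  obtain ⟨hn, hnorm, hne, hrefl⟩ := hx
  refine ⟨hn, fun i hi => (L.norm_map _).trans (hnorm i hi),
    fun i hi h => hne i hi (L.injective h), fun i hi => ?_⟩
  simp only [← map_sub, L.norm_map, ← map_smul, L.inner_map_map]
  exact congrArg L (hrefl i hi)

lemma brtSum_map (f : E² → ℝ) (n : ℕ) (x : ℕ → E²) (L : E² →ₗᵢ[ℝ] E²) :
    brtSum f n (fun i => L (x i)) = brtSum (fun p => f (L p)) n x := by
  simp only [brtSum, ← map_sub, L.norm_map, ← map_smul, ← map_add]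

lemma hasDerivAt_comp_rot {f g : E² → ℝ}
    (hderiv : ∀ x : E², HasDerivAt (fun β : ℝ => f (rot β x)) (g x) 0) (y : E²) (β : ℝ) :
    HasDerivAt (fun γ : ℝ => f (rot γ y)) (g (rot β y)) β := by
  have h := HasDerivAt.comp_sub_const β β (by rw [sub_self]; exact hderiv (rot β y))
  simpa only [rot_rot, sub_add_cancel] using h

lemma hasDerivAt_intervalIntegral_comp_rot {f g : E² → ℝ}
    (hderiv : ∀ x : E², HasDerivAt (fun β : ℝ => f (rot β x)) (g x) 0) (hf : Continuous f)
    (hg : Continuous g) {y : ℝ → E²} (hy : Continuous y) (s t : ℝ) :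
    HasDerivAt (fun β => ∫ τ in s..t, f (rot β (y τ))) (∫ τ in s..t, g (y τ)) 0 := by
  obtain ⟨R, hR⟩ := isCompact_uIcc.exists_bound_of_continuousOn hy.norm.continuousOn
  obtain ⟨C, hC⟩ :=
    (isCompact_closedBall (0 : E²) R).exists_bound_of_continuousOn hg.continuousOn
  have hrot : ∀ β, Continuous (rot β) := fun β => (rotLI β).continuous
  have hbound : ∀ τ ∈ Set.uIoc s t, ∀ β : ℝ, ‖g (rot β (y τ))‖ ≤ C := fun τ hτ β =>
    hC _ (by
      rw [mem_closedBall_zero_iff, ← rotLI_apply, LinearIsometry.norm_map]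
      simpa using hR τ (Set.uIoc_subset_uIcc hτ))
  have key := intervalIntegral.hasDerivAt_integral_of_dominated_loc_of_deriv_le
    (F := fun β τ => f (rot β (y τ))) (F' := fun β τ => g (rot β (y τ))) (x₀ := 0)
    (μ := volume) (bound := fun _ => C) (s := Set.univ) univ_mem
    (Eventually.of_forall fun β => (hf.comp ((hrot β).comp hy)).aestronglyMeasurable)
    ((hf.comp ((hrot 0).comp hy)).intervalIntegrable s t)
    (hg.comp ((hrot 0).comp hy)).aestronglyMeasurable
    (Eventually.of_forall fun τ hτ β _ => hbound τ hτ β) intervalIntegrable_const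
    (Eventually.of_forall fun τ _ β _ => hasDerivAt_comp_rot hderiv (y τ) β)
  simpa only [rot_zero] using key.2

lemma hasDerivAt_brtSum_rot {f g : E² → ℝ}
    (hderiv : ∀ x : E², HasDerivAt (fun β : ℝ => f (rot β x)) (g x) 0) (hf : Continuous f)
    (hg : Continuous g) (n : ℕ) (x : ℕ → E²) :
    HasDerivAt (fun β => brtSum f n (fun i => rot β (x i))) (brtSum g n x) 0 := by
  simp only [← rotLI_apply, brtSum_map]
  exact HasDerivAt.fun_sum fun i _ => .const_mul _ <|
    hasDerivAt_intervalIntegral_comp_rot hderiv hf hg (by fun_prop) 0 1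

theorem stmt7_general (a b a' b' : ℝ) (hab : a < a') (hb'b : b' < b)
    (f g : EuclideanSpace ℝ (Fin 2) → ℝ) (hf : Continuous f) (hg : Continuous g)
    (hderiv : ∀ x : EuclideanSpace ℝ (Fin 2),
      HasDerivAt (fun β : ℝ => f (rot β x)) (g x) 0)
    (hvanish : ∀ (n : ℕ) (x : ℕ → EuclideanSpace ℝ (Fin 2)), IsBrokenRayDisc n x →
      x 0 ∈ arc a b → x n ∈ arc a b → brtSum f n x = 0) :
    ∀ (n : ℕ) (x : ℕ → EuclideanSpace ℝ (Fin 2)), IsBrokenRayDisc n x →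
      x 0 ∈ arc a' b' → x n ∈ arc a' b' → brtSum g n x = 0 := by
  intro n x hx hx0 hxn
  have hrot_vanish : ∀ᶠ β in 𝓝 0, brtSum f n (fun i => rot β (x i)) = 0 := by
    filter_upwards [Ioo_mem_nhds (sub_neg.2 hab) (sub_pos.2 hb'b)] with β ⟨hβa, hβb⟩
    have hsub : arc (a' + β) (b' + β) ⊆ arc a b := arc_mono (by linarith) (by linarith)
    exact hvanish n _ (hx.map (rotLI β)) (hsub (rot_mem_arc hx0 β)) (hsub (rot_mem_arc hxn β))
  exact (hasDerivAt_brtSum_rot hderiv hf hg n x).unique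
    ((hasDerivAt_const 0 0).congr_of_eventuallyEq hrot_vanish)

/-- if a continuous function `f` on the closed unit disc has vanishing
broken ray transform with set of tomography an open arc `E` (angles in `(a,b)`), and
`f` has a continuous angular derivative `g = ∂_θ f`, then `g` has vanishing broken
ray transform with respect to any slightly smaller arc `E'` (angles in `(a',b')` with
`a < a' < b' < b`). -/
theorem stmt7 (a b a' b' : ℝ) (hab : a < a') (ha'b' : a' < b') (hb'b : b' < b)
    (f g : EuclideanSpace ℝ (Fin 2) → ℝ) (hf : Continuous f) (hg : Continuous g)
    (hderiv : ∀ x : EuclideanSpace ℝ (Fin 2),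
      HasDerivAt (fun β : ℝ => f (rot β x)) (g x) 0)
    (hvanish : ∀ (n : ℕ) (x : ℕ → EuclideanSpace ℝ (Fin 2)), IsBrokenRayDisc n x →
      x 0 ∈ arc a b → x n ∈ arc a b → brtSum f n x = 0) :
    ∀ (n : ℕ) (x : ℕ → EuclideanSpace ℝ (Fin 2)), IsBrokenRayDisc n x →
      x 0 ∈ arc a' b' → x n ∈ arc a' b' → brtSum g n x = 0 :=
  stmt7_general a b a' b' hab hb'b f g hf hg hderiv hvanish
end

section
/- Let f : T² → ℂ be continuous on the torus T² = ℝ²/ℤ² and suppose the integral of f over every closed geodesic of T² vanishes. Then f ≡ 0. -/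
open MeasureTheory Complex UnitAddTorus

/-!
Lift `f` to a continuous function `F` on `UnitAddTorus (Fin 2)`. Given `k ∈ ℤ²`, pick `w ≠ 0` in `ℤ²`
with `w ⬝ᵥ k = 0`, so that the character `mFourier (-k)` is invariant under translation by `t • w`.
Averaging the translation-invariant integral that defines the `k`-th Fourier coefficient of `F` over
the translations by `t • w`, `t ∈ [0, 1]`, and swapping the integrals writes this coefficient as the
integral of `mFourier (-k)` times integrals of `F` over closed geodesics, so it vanishes. By
completeness of the Fourier basis of `L²`, a continuous function whose Fourier coefficients all
vanish is zero.
-/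

-- `mFourierCoeff` and `mFourierBasis` use the Haar probability measure on each circle factor,
-- which Mathlib only declares as local instances.
attribute [local instance] instMeasureSpaceUnitAddCircle instIsAddHaarMeasureUnitAddCircleVolume
  instIsProbabilityMeasureUnitAddCircleVolume

namespace UnitAddTorus

section Quotient

variable {d : Type*}

def mk : C(d → ℝ, UnitAddTorus d) := ⟨fun x i => x i, by fun_prop⟩

theorem mk_add (x y : d → ℝ) : mk (x + y) = mk x + mk y := rfl

theorem isOpenQuotientMap_mk : IsOpenQuotientMap (mk : (d → ℝ) → UnitAddTorus d) :=
  .piMap fun _ => QuotientAddGroup.isOpenQuotientMap_mk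

theorem exists_eq_add_of_mk_eq_mk {x y : d → ℝ} (h : mk x = mk y) :
    ∃ n : d → ℤ, y = x + fun i => (n i : ℝ) := by
  choose n hn using fun i =>
    AddSubgroup.mem_zmultiples_iff.mp (QuotientAddGroup.eq.mp (congrFun h i))
  refine ⟨n, funext fun i => ?_⟩
  have := hn i
  rw [zsmul_one] at this
  simp only [Pi.add_apply]
  linarith

theorem exists_apply_mk_eq_of_periodic {Z : Type*} [TopologicalSpace Z] (g : C(d → ℝ, Z))
    (hg : ∀ x (n : d → ℤ), g (x + fun i => (n i : ℝ)) = g x) :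
    ∃ G : C(UnitAddTorus d, Z), ∀ x, G (mk x) = g x := by
  have hfac : Function.FactorsThrough g mk := fun x y hxy => by
    obtain ⟨n, rfl⟩ := exists_eq_add_of_mk_eq_mk hxy
    exact (hg x n).symm
  exact ⟨isOpenQuotientMap_mk.isQuotientMap.lift g hfac,
    DFunLike.congr_fun (isOpenQuotientMap_mk.isQuotientMap.lift_comp g hfac)⟩

end Quotient

variable {d : Type*} [Fintype d]

theorem mFourier_add_apply (n : d → ℤ) (x y : UnitAddTorus d) :
    mFourier n (x + y) = mFourier n x * mFourier n y := by
  simp only [mFourier, ContinuousMap.coe_mk, Pi.add_apply, fourier_apply, zsmul_add,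
    AddCircle.toCircle_add, Circle.coe_mul, Finset.prod_mul_distrib]

theorem mFourier_mk (n : d → ℤ) (y : d → ℝ) :
    mFourier n (mk y) = exp (2 * Real.pi * I * ∑ i, n i * y i) := by
  rw [ofReal_sum, Finset.mul_sum, exp_sum]
  refine Finset.prod_congr rfl fun i _ => ?_
  simp only [mk, ContinuousMap.coe_mk, fourier_coe_apply]
  push_cast
  ring_nf

theorem eq_zero_of_mFourierCoeff_eq_zero (F : C(UnitAddTorus d, ℂ))
    (h : ∀ n, mFourierCoeff F n = 0) : F = 0 := by
  have : mFourierBasis.repr (F.toLp 2 volume ℂ) = 0 := by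
    ext n
    rw [mFourierBasis_repr, mFourierCoeff_toLp, h]
    rfl
  rw [LinearIsometryEquiv.map_eq_zero_iff, ← map_zero (ContinuousMap.toLp 2 volume ℂ)] at this
  exact ContinuousMap.toLp_injective _ this

theorem mFourierCoeff_eq_zero_of_integral_geodesic_eq_zero (F : C(UnitAddTorus d, ℂ)) {k w : d → ℤ}
    (hwk : w ⬝ᵥ k = 0)
    (hF : ∀ x, ∫ t in (0 : ℝ)..1, F (x + mk (t • fun i => (w i : ℝ))) = 0) :
    mFourierCoeff F k = 0 := by
  set c : ℝ → UnitAddTorus d := fun t => mk (t • fun i => (w i : ℝ))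
  have hc : ∀ t, mFourier (-k) (c t) = 1 := by
    intro t
    have : ∑ i, ((-k) i : ℝ) * (t • fun i => (w i : ℝ)) i = -t * ((∑ i, w i * k i : ℤ) : ℝ) := by
      push_cast
      rw [Finset.mul_sum]
      refine Finset.sum_congr rfl fun i _ => ?_
      simp only [Pi.smul_apply, smul_eq_mul, Pi.neg_apply, Int.cast_neg]
      ring
    rw [mFourier_mk, this, ← dotProduct, hwk]
    simp
  have hint : Integrable (Function.uncurry fun t x => mFourier (-k) x * F (x + c t))
      ((volume.restrict (Set.uIoc 0 1)).prod volume) := by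
    rw [← Measure.restrict_univ (μ := (volume : Measure (UnitAddTorus d))), Measure.prod_restrict]
    refine (ContinuousOn.integrableOn_compact (isCompact_Icc.prod isCompact_univ) ?_).mono_set
      (Set.prod_mono Set.uIoc_subset_uIcc subset_rfl)
    exact Continuous.continuousOn (by fun_prop)
  calc mFourierCoeff F k
      = ∫ t in (0 : ℝ)..1, ∫ x, mFourier (-k) (x + c t) * F (x + c t) := by
        simp only [integral_add_right_eq_self (fun x => mFourier (-k) x * F x)]
        simp [mFourierCoeff]
    _ = ∫ t in (0 : ℝ)..1, ∫ x, mFourier (-k) x * F (x + c t) := by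
        simp only [mFourier_add_apply, hc, mul_one]
    _ = ∫ x, mFourier (-k) x * ∫ t in (0 : ℝ)..1, F (x + c t) := by
        rw [intervalIntegral_integral_swap hint]
        simp only [intervalIntegral.integral_const_mul]
    _ = 0 := by simp [c, hF]

end UnitAddTorus

/-- a continuous function on the torus `T² = ℝ²/ℤ²` (encoded as a
ℤ²-periodic continuous function on ℝ²) whose integral over every closed geodesic of
`T²` vanishes is identically zero. -/
theorem stmt13 (f : ℝ × ℝ → ℂ) (hf : Continuous f)
    (hper : ∀ x y : ℝ, f (x + 1, y) = f (x, y) ∧ f (x, y + 1) = f (x, y))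
    (hgeo : ∀ (x : ℝ × ℝ) (p q : ℤ), ¬(p = 0 ∧ q = 0) →
      (∫ t in (0 : ℝ)..1, f (x.1 + t * p, x.2 + t * q)) = 0) :
    ∀ x, f x = 0 := by
  have hper₁ (b : ℝ) : Function.Periodic (fun a => f (a, b)) 1 := fun a => (hper a b).1
  have hper₂ (a : ℝ) : Function.Periodic (fun b => f (a, b)) 1 := fun b => (hper a b).2
  have hf_int (a b : ℝ) (m n : ℤ) : f (a + m, b + n) = f (a, b) := calc
    f (a + m, b + n) = f (a, b + n) := by simpa using (hper₁ (b + n)).int_mul m a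
    _ = f (a, b) := by simpa using (hper₂ a).int_mul n b
  let g : C(Fin 2 → ℝ, ℂ) := ⟨fun x => f (x 0, x 1), by fun_prop⟩
  obtain ⟨F, hF⟩ := exists_apply_mk_eq_of_periodic g fun x n => hf_int (x 0) (x 1) (n 0) (n 1)
  have hF_geo (w : Fin 2 → ℤ) (hw : w ≠ 0) (x : UnitAddTorus (Fin 2)) :
      ∫ t in (0 : ℝ)..1, F (x + mk (t • fun i => (w i : ℝ))) = 0 := by
    obtain ⟨a, rfl⟩ := isOpenQuotientMap_mk.surjective x
    simp only [← mk_add, hF]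
    exact hgeo (a 0, a 1) (w 0) (w 1) fun h => hw (by ext i; fin_cases i <;> simp [h])
  have hF_zero : F = 0 := eq_zero_of_mFourierCoeff_eq_zero F fun k => by
    obtain ⟨w, hw, hwk⟩ := exists_ne_zero_dotProduct_eq_zero k
    exact mFourierCoeff_eq_zero_of_integral_geodesic_eq_zero F hwk (hF_geo w hw)
  intro x
  simpa [g, hF_zero] using (hF ![x.1, x.2]).symm
end
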